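/- arXiv:1806.02124 — 4 statements merged into one kernel-verified Lean document; each statement's English description precedes it below -/
import Mathlib

section
/- Let A be a unital associative algebra over ℂ, let ω : A → ℂ be a linear functional with ω(1) = 1, and let (α_t)_{t∈ℝ} be a one-parameter group of algebra automorphisms of A (α_0 = id and α_{s+t} = α_s ∘ α_t). Suppose ω satisfies the KMS condition at inverse temperature β > 0: for every a, b ∈ A there exists a function F : ℂ → ℂ which is continuous and bounded on the closed strip S_β = { z ∈ ℂ : 0 ≤ Im z ≤ β }, holomorphic on the open strip { z : 0 < Im z < β }, and satisfies F(t) = ω(a · α_t(b)) and F(t + iβ) = ω(α_t(b) · a) for all real t. Then ω is invariant under the evolution: ω(α_t(b)) = ω(b) for all t ∈ ℝ and all b ∈ A. -/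
/-!
Taking `a = 1` in the KMS condition, the function `F` attached to `b` takes the same values
`ω (α t b)` on both edges of the strip: `F (t + β I) = F t`. Stacking translates of `F` by
multiples of `β I` therefore gives a continuous function on `ℂ`, holomorphic off the lines
`im z ∈ β ℤ`. It is holomorphic on these lines too, by Morera's theorem: cutting a rectangle along
such a line leaves two rectangles whose interiors avoid it, so Cauchy–Goursat applies to both.
The extension is bounded, hence constant by Liouville, and `ω (α t b) = F t = F 0 = ω b`.
-/

open Complex Set

namespace Complex

section Seam

variable {E : Type*} [NormedAddCommGroup E] [NormedSpace ℂ E] {f : ℂ → E} {U : Set ℂ} {c : ℝ}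

lemma wedgeIntegral_add_wedgeIntegral_eq_zero_of_notMem_uIoo {z w : ℂ}
    (hzw : Rectangle z w ⊆ U) (hf : ContinuousOn f U)
    (hf' : DifferentiableOn ℂ f (U \ im ⁻¹' {c})) (hc : c ∉ uIoo z.im w.im) :
    wedgeIntegral z w f + wedgeIntegral w z f = 0 := by
  rw [wedgeIntegral_add_wedgeIntegral_eq]
  refine integral_boundary_rect_eq_zero_of_continuousOn_of_differentiableOn f z w
    (hf.mono hzw) (hf'.mono fun p hp ↦ ⟨hzw ?_, fun hpc ↦ hc (hpc ▸ hp.2)⟩)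
  exact ⟨Ioo_subset_Icc_self hp.1, uIoo_subset_uIcc_self hp.2⟩

lemma wedgeIntegral_add_wedgeIntegral_eq_add_of_mem_uIcc {z w : ℂ}
    (hf : ContinuousOn f (Rectangle z w)) (hc : c ∈ uIcc z.im w.im) :
    wedgeIntegral z w f + wedgeIntegral w z f =
      (wedgeIntegral z ⟨w.re, c⟩ f + wedgeIntegral ⟨w.re, c⟩ z f) +
        (wedgeIntegral ⟨z.re, c⟩ w f + wedgeIntegral w ⟨z.re, c⟩ f) := by
  have hside : ∀ x ∈ uIcc z.re w.re, ∀ y₁ ∈ uIcc z.im w.im, ∀ y₂ ∈ uIcc z.im w.im,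
      IntervalIntegrable (fun y : ℝ ↦ f (x + y * I)) MeasureTheory.volume y₁ y₂ := by
    intro x hx y₁ hy₁ y₂ hy₂
    refine ContinuousOn.intervalIntegrable (hf.comp (by fun_prop) fun y hy ↦ ?_)
    simpa [Rectangle, mem_reProdIm] using ⟨hx, uIcc_subset_uIcc hy₁ hy₂ hy⟩
  simp only [wedgeIntegral_add_wedgeIntegral_eq]
  rw [← intervalIntegral.integral_add_adjacent_intervals
      (hside _ right_mem_uIcc _ left_mem_uIcc _ hc) (hside _ right_mem_uIcc _ hc _ right_mem_uIcc),
    ← intervalIntegral.integral_add_adjacent_intervals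
      (hside _ left_mem_uIcc _ left_mem_uIcc _ hc) (hside _ left_mem_uIcc _ hc _ right_mem_uIcc)]
  simp only [smul_add]
  abel

theorem differentiableOn_of_differentiableOn_diff_im_preimage_singleton [CompleteSpace E]
    (hU : IsOpen U) (hf : ContinuousOn f U) (hf' : DifferentiableOn ℂ f (U \ im ⁻¹' {c})) :
    DifferentiableOn ℂ f U := by
  refine (isConservativeOn_and_continuousOn_iff_isDifferentiableOn hU).1 ⟨fun z w hzw ↦ ?_, hf⟩
  rw [← add_eq_zero_iff_eq_neg]
  by_cases hc : c ∈ uIoo z.im w.im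
  · have hc' := uIoo_subset_uIcc_self hc
    have hlower : Rectangle z ⟨w.re, c⟩ ⊆ Rectangle z w :=
      fun p hp ↦ ⟨hp.1, uIcc_subset_uIcc left_mem_uIcc hc' hp.2⟩
    have hupper : Rectangle ⟨z.re, c⟩ w ⊆ Rectangle z w :=
      fun p hp ↦ ⟨hp.1, uIcc_subset_uIcc hc' right_mem_uIcc hp.2⟩
    rw [wedgeIntegral_add_wedgeIntegral_eq_add_of_mem_uIcc (hf.mono hzw) hc',
      wedgeIntegral_add_wedgeIntegral_eq_zero_of_notMem_uIoo (hlower.trans hzw) hf hf'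
        right_notMem_uIoo,
      wedgeIntegral_add_wedgeIntegral_eq_zero_of_notMem_uIoo (hupper.trans hzw) hf hf'
        left_notMem_uIoo, add_zero]
  · exact wedgeIntegral_add_wedgeIntegral_eq_zero_of_notMem_uIoo hzw hf hf' hc

end Seam

section PeriodicExtension

variable {E : Type*} {F : ℂ → E} {β : ℝ}

noncomputable def imPeriodicExtension (hβ : 0 < β) (F : ℂ → E) (z : ℂ) : E :=
  F (z.re + toIcoMod hβ 0 z.im * I)

lemma imPeriodicExtension_periodic (hβ : 0 < β) (F : ℂ → E) :
    Function.Periodic (imPeriodicExtension hβ F) (β * I) := by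
  intro z
  simp [imPeriodicExtension, toIcoMod_add_right]

lemma range_imPeriodicExtension_subset (hβ : 0 < β) (F : ℂ → E) :
    range (imPeriodicExtension hβ F) ⊆ F '' (im ⁻¹' Icc 0 β) := by
  rintro _ ⟨z, rfl⟩
  refine ⟨_, ?_, rfl⟩
  simpa using Ico_subset_Icc_self (toIcoMod_mem_Ico hβ 0 z.im)

lemma eqOn_imPeriodicExtension (hβ : 0 < β) (hper : ∀ t : ℝ, F (t + β * I) = F t) :
    EqOn (imPeriodicExtension hβ F) F (im ⁻¹' Icc 0 β) := by
  rintro z ⟨hz₀, hzβ⟩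
  rcases hzβ.lt_or_eq with hlt | rfl
  · simp [imPeriodicExtension, (toIcoMod_eq_self hβ).2 ⟨hz₀, by simpa using hlt⟩, re_add_im]
  · have : toIcoMod hβ 0 z.im = 0 := by simpa using toIcoMod_apply_right hβ (0 : ℝ)
    simp [imPeriodicExtension, this, ← hper, re_add_im]

lemma continuousOn_imPeriodicExtension [TopologicalSpace E] (hβ : 0 < β)
    (hF : ContinuousOn F (im ⁻¹' Icc 0 β))
    (hper : ∀ t : ℝ, F (t + β * I) = F t) :
    ContinuousOn (imPeriodicExtension hβ F) (im ⁻¹' Icc (-β) β) := by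
  set G := imPeriodicExtension hβ F
  have hupper : ContinuousOn G (im ⁻¹' Icc 0 β) := hF.congr (eqOn_imPeriodicExtension hβ hper)
  have hlower : ContinuousOn G (im ⁻¹' Icc (-β) 0) :=
    (hupper.comp (by fun_prop) fun w hw ↦ by
      simp only [mem_preimage, mem_Icc, add_im, mul_im, ofReal_re, I_im, ofReal_im, I_re] at hw ⊢
      constructor <;> linarith [hw.1, hw.2]).congr
      fun w _ ↦ (imPeriodicExtension_periodic hβ F w).symm
  rw [← Icc_union_Icc_eq_Icc (neg_nonpos.2 hβ.le) hβ.le, preimage_union]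
  exact hlower.union_of_isClosed hupper (isClosed_Icc.preimage continuous_im)
    (isClosed_Icc.preimage continuous_im)

end PeriodicExtension

lemma differentiable_of_periodic_of_differentiableOn_strip {E : Type*} [NormedAddCommGroup E]
    [NormedSpace ℂ E] {G : ℂ → E} {β : ℝ} (hβ : 0 < β) (hG : Function.Periodic G (β * I))
    (hG' : DifferentiableOn ℂ G (im ⁻¹' Ioo (-β) β)) : Differentiable ℂ G := by
  intro z
  obtain ⟨hk₀, hkβ⟩ := toIcoMod_mem_Ico hβ 0 z.im
  rw [← self_sub_toIcoDiv_zsmul, zsmul_eq_mul] at hk₀ hkβ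
  set k := toIcoDiv hβ 0 z.im
  have hz' : im ⁻¹' Ioo (-β) β ∈ nhds (z - k • (β * I)) := by
    refine (isOpen_Ioo.preimage continuous_im).mem_nhds ?_
    simp only [mem_preimage, mem_Ioo, zsmul_eq_mul, sub_im, mul_im, intCast_re, intCast_im,
      ofReal_re, ofReal_im, I_re, I_im]
    constructor <;> linarith
  exact ((hG'.differentiableAt hz').comp z (differentiableAt_id.sub_const _)).congr_of_eventuallyEq
    (.of_forall fun w ↦ (hG.sub_zsmul_eq k).symm)

section Strip

variable {E : Type*} [NormedAddCommGroup E] [NormedSpace ℂ E] [CompleteSpace E] {F : ℂ → E}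
  {β : ℝ}

lemma differentiableOn_imPeriodicExtension (hβ : 0 < β)
    (hF : ContinuousOn F (im ⁻¹' Icc 0 β)) (hF' : DifferentiableOn ℂ F (im ⁻¹' Ioo 0 β))
    (hper : ∀ t : ℝ, F (t + β * I) = F t) :
    DifferentiableOn ℂ (imPeriodicExtension hβ F) (im ⁻¹' Ioo (-β) β) := by
  set G := imPeriodicExtension hβ F
  have hupper : DifferentiableOn ℂ G (im ⁻¹' Ioo 0 β) :=
    hF'.congr ((eqOn_imPeriodicExtension hβ hper).mono (preimage_mono Ioo_subset_Icc_self))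
  have hlower : DifferentiableOn ℂ G (im ⁻¹' Ioo (-β) 0) :=
    (hupper.comp (by fun_prop) fun w hw ↦ by
      simp only [mem_preimage, mem_Ioo, add_im, mul_im, ofReal_re, I_im, ofReal_im, I_re] at hw ⊢
      constructor <;> linarith [hw.1, hw.2]).congr
      fun w _ ↦ (imPeriodicExtension_periodic hβ F w).symm
  refine differentiableOn_of_differentiableOn_diff_im_preimage_singleton (c := 0)
    (isOpen_Ioo.preimage continuous_im)
    ((continuousOn_imPeriodicExtension hβ hF hper).mono (preimage_mono Ioo_subset_Icc_self))
    ((hlower.union_of_isOpen hupper (isOpen_Ioo.preimage continuous_im)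
      (isOpen_Ioo.preimage continuous_im)).mono ?_)
  rintro w ⟨⟨hw₁, hw₂⟩, hw₀⟩
  rcases lt_or_gt_of_ne hw₀ with hneg | hpos
  exacts [Or.inl ⟨hw₁, hneg⟩, Or.inr ⟨hpos, hw₂⟩]

theorem apply_eq_apply_of_strip_of_periodic (hβ : 0 < β)
    (hF : ContinuousOn F (im ⁻¹' Icc 0 β)) (hF' : DifferentiableOn ℂ F (im ⁻¹' Ioo 0 β))
    (hFb : Bornology.IsBounded (F '' (im ⁻¹' Icc 0 β))) (hper : ∀ t : ℝ, F (t + β * I) = F t)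
    {z w : ℂ} (hz : z ∈ im ⁻¹' Icc 0 β) (hw : w ∈ im ⁻¹' Icc 0 β) : F z = F w := by
  rw [← eqOn_imPeriodicExtension hβ hper hz, ← eqOn_imPeriodicExtension hβ hper hw]
  have hG : Differentiable ℂ (imPeriodicExtension hβ F) :=
    differentiable_of_periodic_of_differentiableOn_strip hβ (imPeriodicExtension_periodic hβ F)
      (differentiableOn_imPeriodicExtension hβ hF hF' hper)
  exact hG.apply_eq_apply_of_bounded (hFb.subset (range_imPeriodicExtension_subset hβ F)) z w

end Strip

end Complex

theorem kms_state_invariant_general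
    {A : Type*} [Ring A] [Algebra ℂ A]
    (ω : A →ₗ[ℂ] ℂ)
    (α : ℝ → (A ≃ₐ[ℂ] A))
    (hα0 : ∀ a : A, α 0 a = a)
    (β : ℝ) (hβ : 0 < β)
    (hKMS : ∀ a b : A, ∃ F : ℂ → ℂ,
      ContinuousOn F {z : ℂ | 0 ≤ z.im ∧ z.im ≤ β} ∧
      (∃ C : ℝ, ∀ z ∈ {z : ℂ | 0 ≤ z.im ∧ z.im ≤ β}, ‖F z‖ ≤ C) ∧
      (∀ z : ℂ, 0 < z.im → z.im < β → DifferentiableAt ℂ F z) ∧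
      (∀ t : ℝ, F t = ω (a * α t b)) ∧
      (∀ t : ℝ, F (t + Complex.I * β) = ω (α t b * a))) :
    ∀ (t : ℝ) (b : A), ω (α t b) = ω b := by
  intro t b
  obtain ⟨F, hFc, ⟨C, hFC⟩, hFd, hF₀, hFβ⟩ := hKMS 1 b
  have hper : ∀ s : ℝ, F (s + β * I) = F s := fun s ↦ by
    rw [mul_comm, hFβ, hF₀, mul_one, one_mul]
  have hFb : Bornology.IsBounded (F '' (im ⁻¹' Icc 0 β)) :=
    isBounded_iff_forall_norm_le.2 ⟨C, forall_mem_image.2 hFC⟩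
  have hreal : ∀ s : ℝ, (s : ℂ) ∈ im ⁻¹' Icc 0 β := fun s ↦ by simpa using hβ.le
  have hF0 : F 0 = ω b := by simpa [hα0] using hF₀ 0
  simpa [hF₀, hF0] using Complex.apply_eq_apply_of_strip_of_periodic hβ hFc
    (fun z hz ↦ (hFd z hz.1 hz.2).differentiableWithinAt) hFb hper (hreal t) (hreal 0)

/-- A KMS state at inverse temperature `β > 0` is invariant under the evolution. -/
theorem kms_state_invariant
    {A : Type*} [Ring A] [Algebra ℂ A]
    (ω : A →ₗ[ℂ] ℂ) (hω1 : ω 1 = 1)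
    (α : ℝ → (A ≃ₐ[ℂ] A))
    (hα0 : ∀ a : A, α 0 a = a)
    (hαadd : ∀ s t : ℝ, ∀ a : A, α (s + t) a = α s (α t a))
    (β : ℝ) (hβ : 0 < β)
    (hKMS : ∀ a b : A, ∃ F : ℂ → ℂ,
      ContinuousOn F {z : ℂ | 0 ≤ z.im ∧ z.im ≤ β} ∧
      (∃ C : ℝ, ∀ z ∈ {z : ℂ | 0 ≤ z.im ∧ z.im ≤ β}, ‖F z‖ ≤ C) ∧
      (∀ z : ℂ, 0 < z.im → z.im < β → DifferentiableAt ℂ F z) ∧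
      (∀ t : ℝ, F t = ω (a * α t b)) ∧
      (∀ t : ℝ, F (t + Complex.I * β) = ω (α t b * a))) :
    ∀ (t : ℝ) (b : A), ω (α t b) = ω b :=
  kms_state_invariant_general ω α hα0 β hβ hKMS
end

section
/- Let β > 0 and let g : ℝ → ℂ be a Schwartz function. Define F(z) = ∫_ℝ g(x) · exp(i·z·x) · (exp(−β·x) + 1)⁻¹ dx for z in the closed strip S_β = { z ∈ ℂ : 0 ≤ Im z ≤ β }. Then: (i) F is continuous on S_β and satisfies |F(z)| ≤ ∫_ℝ |g(x)| dx for all z ∈ S_β; (ii) F is complex differentiable at every point of the open strip { z : 0 < Im z < β }; (iii) for every real t, F(t + iβ) = ∫_ℝ g(x) · exp(i·t·x) · (exp(β·x) + 1)⁻¹ dx. -/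
/-!
On the strip `0 ≤ Im z ≤ β` the kernel `e^{izx} / (e^{-βx} + 1)` has modulus
`e^{-x Im z} / (e^{-βx} + 1) ≤ 1`, because `y ↦ e^{-yx}` is monotone and so bounded on `[0, β]` by
`max 1 e^{-βx}`. Hence `F` is dominated by `∫ |g|`, which gives continuity and the bound; on the
open strip the `z`-derivative `ix · kernel` is dominated by `|x g(x)|`, integrable for Schwartz `g`,
which gives holomorphy. At `z = t + iβ` the kernel is `e^{itx} e^{-βx} / (e^{-βx} + 1)
= e^{itx} / (e^{βx} + 1)`.
-/

open MeasureTheory Set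

noncomputable def fermiKernel (β : ℝ) (z : ℂ) (x : ℝ) : ℂ :=
  Complex.exp (Complex.I * z * x) * ((Real.exp (-β * x) + 1 : ℝ) : ℂ)⁻¹

lemma exp_neg_mul_le_exp_neg_mul_add_one {β y : ℝ} (hy : y ∈ Icc 0 β) (x : ℝ) :
    Real.exp (-y * x) ≤ Real.exp (-β * x) + 1 := by
  rcases le_or_gt 0 x with hx | hx
  · have : Real.exp (-y * x) ≤ 1 := Real.exp_le_one_iff.mpr (by nlinarith [hy.1])
    linarith [Real.exp_pos (-β * x)]
  · have : Real.exp (-y * x) ≤ Real.exp (-β * x) := Real.exp_le_exp.mpr (by nlinarith [hy.2])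
    linarith

lemma norm_fermiKernel (β : ℝ) (z : ℂ) (x : ℝ) :
    ‖fermiKernel β z x‖ = Real.exp (-z.im * x) / (Real.exp (-β * x) + 1) := by
  rw [fermiKernel, norm_mul, norm_inv, Complex.norm_exp, Complex.norm_real, Real.norm_eq_abs,
    abs_of_pos (by positivity), div_eq_mul_inv]
  simp [Complex.mul_re]

lemma norm_fermiKernel_le_one {β : ℝ} {z : ℂ} (hz : z.im ∈ Icc 0 β) (x : ℝ) :
    ‖fermiKernel β z x‖ ≤ 1 := by
  rw [norm_fermiKernel, div_le_one (by positivity)]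
  exact exp_neg_mul_le_exp_neg_mul_add_one hz x

lemma continuous_fermiKernel (β : ℝ) : Continuous (Function.uncurry (fermiKernel β)) := by
  unfold fermiKernel Function.uncurry
  refine Continuous.mul (by fun_prop) (Continuous.inv₀ (by fun_prop) fun _ => ?_)
  exact Complex.ofReal_ne_zero.mpr (by positivity)

lemma hasDerivAt_fermiKernel (β : ℝ) (z : ℂ) (x : ℝ) :
    HasDerivAt (fermiKernel β · x) (Complex.I * x * fermiKernel β z x) z := by
  have hlin : HasDerivAt (fun w : ℂ => Complex.I * w * x) (Complex.I * x) z := by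
    simpa using ((hasDerivAt_id z).const_mul Complex.I).mul_const (x : ℂ)
  exact (hlin.cexp.mul_const _).congr_deriv (by unfold fermiKernel; ring)

lemma fermiKernel_add_I_mul (β t x : ℝ) :
    fermiKernel β (t + Complex.I * β) x =
      Complex.exp (Complex.I * t * x) * ((Real.exp (β * x) + 1 : ℝ) : ℂ)⁻¹ := by
  have hexp : Complex.exp (Complex.I * (t + Complex.I * β) * x) =
      Complex.exp (Complex.I * t * x) * (Real.exp (-β * x) : ℂ) := by
    rw [Complex.ofReal_exp, ← Complex.exp_add]
    congr 1
    push_cast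
    linear_combination (β : ℂ) * x * Complex.I_mul_I
  have hfermi : Real.exp (-β * x) * (Real.exp (-β * x) + 1)⁻¹ = (Real.exp (β * x) + 1)⁻¹ := by
    have hmul : Real.exp (-β * x) * Real.exp (β * x) = 1 := by
      rw [← Real.exp_add]; simp
    field_simp
    rw [neg_mul] at hmul
    linarith
  rw [fermiKernel, hexp, mul_assoc, ← Complex.ofReal_inv, ← Complex.ofReal_mul, hfermi,
    Complex.ofReal_inv]

section Integral

variable {β : ℝ} {g : ℝ → ℂ}

lemma aestronglyMeasurable_mul_fermiKernel (hg : Integrable g) (z : ℂ) :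
    AEStronglyMeasurable (fun x => g x * fermiKernel β z x) :=
  hg.aestronglyMeasurable.mul
    ((continuous_fermiKernel β).comp (Continuous.prodMk_right z)).aestronglyMeasurable

lemma norm_mul_fermiKernel_le {z : ℂ} (hz : z.im ∈ Icc 0 β) (x : ℝ) :
    ‖g x * fermiKernel β z x‖ ≤ ‖g x‖ := by
  rw [norm_mul]
  exact mul_le_of_le_one_right (norm_nonneg _) (norm_fermiKernel_le_one hz x)

lemma norm_integral_mul_fermiKernel_le (hg : Integrable g) {z : ℂ} (hz : z.im ∈ Icc 0 β) :
    ‖∫ x, g x * fermiKernel β z x‖ ≤ ∫ x, ‖g x‖ :=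
  norm_integral_le_of_norm_le hg.norm (ae_of_all _ (norm_mul_fermiKernel_le hz))

lemma continuousOn_integral_mul_fermiKernel (hg : Integrable g) :
    ContinuousOn (fun z => ∫ x, g x * fermiKernel β z x) (Complex.im ⁻¹' Icc 0 β) :=
  continuousOn_of_dominated (fun z _ => aestronglyMeasurable_mul_fermiKernel hg z)
    (fun _ hz => ae_of_all _ (norm_mul_fermiKernel_le hz)) hg.norm
    (ae_of_all _ fun x => (continuous_const.mul
      ((continuous_fermiKernel β).comp (Continuous.prodMk_left x))).continuousOn)

lemma differentiableAt_integral_mul_fermiKernel (hg : Integrable g)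
    (hg₁ : Integrable fun x => ‖x‖ * ‖g x‖) {z : ℂ} (hz : z.im ∈ Ioo 0 β) :
    DifferentiableAt ℂ (fun w => ∫ x, g x * fermiKernel β w x) z := by
  have hstrip : Complex.im ⁻¹' Ioo 0 β ∈ nhds z :=
    (isOpen_Ioo.preimage Complex.continuous_im).mem_nhds hz
  have hderiv_le : ∀ x, ∀ w ∈ Complex.im ⁻¹' Ioo 0 β,
      ‖g x * (Complex.I * x * fermiKernel β w x)‖ ≤ ‖x‖ * ‖g x‖ := fun x w hw => by
    calc ‖g x * (Complex.I * x * fermiKernel β w x)‖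
        = ‖x‖ * ‖g x‖ * ‖fermiKernel β w x‖ := by simp only [norm_mul, Complex.norm_I, Complex.norm_real]; ring
      _ ≤ ‖x‖ * ‖g x‖ := mul_le_of_le_one_right (by positivity)
          (norm_fermiKernel_le_one (Ioo_subset_Icc_self hw) x)
  refine (hasDerivAt_integral_of_dominated_loc_of_deriv_le hstrip
    (.of_forall fun w => aestronglyMeasurable_mul_fermiKernel hg w)
    (hg.norm.mono' (aestronglyMeasurable_mul_fermiKernel hg z)
      (ae_of_all _ (norm_mul_fermiKernel_le (Ioo_subset_Icc_self hz))))
    ?_ (ae_of_all _ hderiv_le) hg₁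
    (ae_of_all _ fun x w _ => (hasDerivAt_fermiKernel β w x).const_mul (g x))).2.differentiableAt
  exact hg.aestronglyMeasurable.mul (by unfold fermiKernel; fun_prop)

end Integral

theorem kms_fermi_two_point_analytic_general
    (β : ℝ) (g : SchwartzMap ℝ ℂ)
    (F : ℂ → ℂ)
    (hF : ∀ z : ℂ, F z =
      ∫ x : ℝ, g x * Complex.exp (Complex.I * z * x) * ((Real.exp (-β * x) + 1 : ℝ) : ℂ)⁻¹) :
    ContinuousOn F {z : ℂ | 0 ≤ z.im ∧ z.im ≤ β} ∧
    (∀ z ∈ {z : ℂ | 0 ≤ z.im ∧ z.im ≤ β}, ‖F z‖ ≤ ∫ x : ℝ, ‖g x‖) ∧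
    (∀ z : ℂ, 0 < z.im → z.im < β → DifferentiableAt ℂ F z) ∧
    (∀ t : ℝ, F (t + Complex.I * β) =
      ∫ x : ℝ, g x * Complex.exp (Complex.I * t * x) * ((Real.exp (β * x) + 1 : ℝ) : ℂ)⁻¹) := by
  obtain rfl : F = fun z => ∫ x, g x * fermiKernel β z x :=
    funext fun z => by simp only [hF, fermiKernel, mul_assoc]
  have hg₁ : Integrable fun x => ‖x‖ * ‖g x‖ := by
    simpa using g.integrable_pow_mul volume 1
  refine ⟨continuousOn_integral_mul_fermiKernel g.integrable,
    fun z hz => norm_integral_mul_fermiKernel_le g.integrable hz,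
    fun z h₀ hβ => differentiableAt_integral_mul_fermiKernel g.integrable hg₁ ⟨h₀, hβ⟩,
    fun t => ?_⟩
  simp only [fermiKernel_add_I_mul, mul_assoc]

/-- Smeared verification of the KMS property for the fermionic two-point function:
the function `F(z) = ∫ g(x) e^{izx} (e^{−βx}+1)^{−1} dx` is continuous and bounded on the
closed strip `0 ≤ Im z ≤ β`, holomorphic in the open strip, and its boundary value at
`Im z = β` carries the opposite Fermi factor. -/
theorem kms_fermi_two_point_analytic
    (β : ℝ) (hβ : 0 < β) (g : SchwartzMap ℝ ℂ)
    (F : ℂ → ℂ)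
    (hF : ∀ z : ℂ, F z =
      ∫ x : ℝ, g x * Complex.exp (Complex.I * z * x) * ((Real.exp (-β * x) + 1 : ℝ) : ℂ)⁻¹) :
    ContinuousOn F {z : ℂ | 0 ≤ z.im ∧ z.im ≤ β} ∧
    (∀ z ∈ {z : ℂ | 0 ≤ z.im ∧ z.im ≤ β}, ‖F z‖ ≤ ∫ x : ℝ, ‖g x‖) ∧
    (∀ z : ℂ, 0 < z.im → z.im < β → DifferentiableAt ℂ F z) ∧
    (∀ t : ℝ, F (t + Complex.I * β) =
      ∫ x : ℝ, g x * Complex.exp (Complex.I * t * x) * ((Real.exp (β * x) + 1 : ℝ) : ℂ)⁻¹) :=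
  kms_fermi_two_point_analytic_general β g F hF
end

section
/- Let μ be a σ-finite measure on ℝ, let β > 0, and let ξ : ℝ → ℂ be measurable with ∫ |ξ(λ)|² dμ(λ) < ∞ and ∫ exp(−β·λ)·|ξ(λ)|² dμ(λ) < ∞. Then there exists a map Φ from the closed strip S_{β/2} = { z ∈ ℂ : 0 ≤ Im z ≤ β/2 } to the Hilbert space L²(μ) such that: (i) for every z ∈ S_{β/2}, Φ(z) is (the class of) the function λ ↦ exp(i·z·λ)·ξ(λ); (ii) Φ is continuous on S_{β/2} and bounded, with ‖Φ(z)‖²_{L²(μ)} ≤ ∫ (1 + exp(−β·λ))·|ξ(λ)|² dμ(λ) for all z ∈ S_{β/2}; (iii) Φ is complex differentiable (as an L²(μ)-valued map) at every point of the open strip { z : 0 < Im z < β/2 }. -/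
/-!
For `0 ≤ Im z ≤ β/2` one has `|e^{izλ}|² = e^{-2λ Im z} ≤ 1 + e^{-βλ}`, so the integrable function
`(1 + e^{-βλ}) |ξ(λ)|²` dominates every `|Φ(z)|²`; this gives the bound and, by dominated
convergence in `L²`, continuity on the closed strip. In the open strip the margin
`s = min (Im z) (β/2 - Im z)` absorbs polynomial factors, `λ² ≤ (2/s²) e^{s|λ|}`, and the
difference quotients of `z ↦ e^{izλ} ξ(λ)` are bounded by `2|λ| e^{|w-z||λ|} |e^{izλ} ξ(λ)|`;
so dominated convergence applies again and they converge in `L²` to `iλ e^{izλ} ξ(λ)`.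
-/

open MeasureTheory Filter Topology
open scoped ENNReal

namespace MeasureTheory

variable {α E : Type*} [MeasurableSpace α] {μ : Measure α} [NormedAddCommGroup E]

theorem tendsto_eLpNorm_of_dominated {ι : Type*} {l : Filter ι} [l.IsCountablyGenerated]
    {p : ℝ≥0∞} (hp₀ : p ≠ 0) (hp : p ≠ ∞) {F : ι → α → E} {bound : α → ℝ}
    (hF_meas : ∀ᶠ i in l, AEStronglyMeasurable (F i) μ)
    (h_bound : ∀ᶠ i in l, ∀ᵐ x ∂μ, ‖F i x‖ ^ p.toReal ≤ bound x)
    (bound_integrable : Integrable bound μ)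
    (h_lim : ∀ᵐ x ∂μ, Tendsto (fun i => F i x) l (𝓝 0)) :
    Tendsto (fun i => eLpNorm (F i) p μ) l (𝓝 0) := by
  have hp_pos : 0 < p.toReal := ENNReal.toReal_pos hp₀ hp
  simp_rw [eLpNorm_eq_lintegral_rpow_enorm_toReal hp₀ hp]
  have h_int : Tendsto (fun i => ∫⁻ x, ‖F i x‖ₑ ^ p.toReal ∂μ) l (𝓝 (∫⁻ _, 0 ∂μ)) := by
    refine tendsto_lintegral_filter_of_dominated_convergence' (fun x => ENNReal.ofReal (bound x))
      ?_ ?_ bound_integrable.lintegral_lt_top.ne ?_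
    · filter_upwards [hF_meas] with i hi using hi.enorm.pow_const _
    · filter_upwards [h_bound] with i hi
      filter_upwards [hi] with x hx
      rw [← ofReal_norm, ENNReal.ofReal_rpow_of_nonneg (norm_nonneg _) hp_pos.le]
      exact ENNReal.ofReal_le_ofReal hx
    · filter_upwards [h_lim] with x hx
      have := (ENNReal.continuous_rpow_const (y := p.toReal)).tendsto 0 |>.comp
        (by simpa using (continuous_enorm.tendsto 0).comp hx)
      simpa [Function.comp_def, ENNReal.zero_rpow_of_pos hp_pos] using this
  rw [lintegral_zero] at h_int
  simpa [Function.comp_def, ENNReal.zero_rpow_of_pos (inv_pos.2 hp_pos)] using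
    ((ENNReal.continuous_rpow_const (y := p.toReal⁻¹)).tendsto 0).comp h_int

theorem Lp.tendsto_of_dominated_convergence {ι : Type*} {l : Filter ι} [l.IsCountablyGenerated]
    {p : ℝ≥0∞} [Fact (1 ≤ p)] (hp : p ≠ ∞) {Φ : ι → Lp E p μ} {φ : Lp E p μ}
    {F : ι → α → E} {f : α → E} {bound : α → ℝ}
    (hΦ : ∀ᶠ i in l, Φ i =ᵐ[μ] F i) (hφ : φ =ᵐ[μ] f)
    (h_bound : ∀ᶠ i in l, ∀ᵐ x ∂μ, ‖F i x - f x‖ ^ p.toReal ≤ bound x)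
    (bound_integrable : Integrable bound μ)
    (h_lim : ∀ᵐ x ∂μ, Tendsto (fun i => F i x) l (𝓝 (f x))) :
    Tendsto Φ l (𝓝 φ) := by
  have hp₀ : p ≠ 0 := (zero_lt_one.trans_le Fact.out).ne'
  have h_sub : ∀ᶠ i in l, ⇑(Φ i) - ⇑φ =ᵐ[μ] F i - f := by
    filter_upwards [hΦ] with i hi using hi.sub hφ
  rw [Lp.tendsto_Lp_iff_tendsto_eLpNorm']
  refine Tendsto.congr' ?_ (tendsto_eLpNorm_of_dominated hp₀ hp ?_ h_bound bound_integrable ?_)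
  · filter_upwards [h_sub] with i hi using (eLpNorm_congr_ae hi).symm
  · filter_upwards [h_sub] with i hi
    exact ((Lp.aestronglyMeasurable _).sub (Lp.aestronglyMeasurable _)).congr hi
  · filter_upwards [h_lim] with x hx using by simpa using hx.sub_const (f x)

theorem memLp_two_of_norm_sq_le {f : α → E} {g : α → ℝ} (hf : AEStronglyMeasurable f μ)
    (hg : Integrable g μ) (hfg : ∀ x, ‖f x‖ ^ 2 ≤ g x) : MemLp f 2 μ :=
  (memLp_two_iff_integrable_sq_norm hf).2 <|
    hg.mono' (hf.norm.pow 2) (.of_forall fun x => by simpa using hfg x)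

theorem Lp.norm_sq_eq_integral_norm_sq (f : Lp E 2 μ) : ‖f‖ ^ 2 = ∫ x, ‖f x‖ ^ 2 ∂μ := by
  rw [Lp.norm_def, toReal_eLpNorm (Lp.aestronglyMeasurable f),
    lpNorm_eq_integral_norm_rpow_toReal two_ne_zero ENNReal.ofNat_ne_top
      (Lp.aestronglyMeasurable f)]
  simp only [ENNReal.toReal_ofNat, Real.rpow_two]
  exact Real.rpow_inv_natCast_pow (integral_nonneg fun x => by positivity) two_ne_zero

theorem exists_Lp_ae_eq_of_memLp {ι : Type*} {p : ℝ≥0∞} {S : Set ι} {f : ι → α → E}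
    (hf : ∀ i ∈ S, MemLp (f i) p μ) : ∃ Φ : ι → Lp E p μ, ∀ i ∈ S, Φ i =ᵐ[μ] f i := by
  classical
  refine ⟨fun i => if h : MemLp (f i) p μ then h.toLp (f i) else 0, fun i hi => ?_⟩
  simpa only [dif_pos (hf i hi)] using (hf i hi).coeFn_toLp

end MeasureTheory

theorem Real.exp_mul_abs_sub_le_one_add_exp {β t r l : ℝ} (hrt : r ≤ t) (hrtβ : r + t ≤ β / 2) :
    Real.exp (2 * r * |l| - 2 * t * l) ≤ 1 + Real.exp (-β * l) := by
  rcases le_or_gt 0 l with hl | hl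
  · rw [abs_of_nonneg hl]
    have : Real.exp (2 * r * l - 2 * t * l) ≤ 1 := Real.exp_le_one_iff.2 (by nlinarith)
    linarith [Real.exp_pos (-β * l)]
  · rw [abs_of_neg hl]
    have : Real.exp (2 * r * -l - 2 * t * l) ≤ Real.exp (-β * l) :=
      Real.exp_le_exp.2 (by nlinarith)
    linarith

theorem Real.sq_le_mul_exp_mul_abs {s : ℝ} (hs : 0 < s) (x : ℝ) :
    x ^ 2 ≤ 2 / s ^ 2 * Real.exp (s * |x|) := by
  have h := Real.pow_div_factorial_le_exp (s * |x|) (by positivity) 2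
  rw [mul_pow, sq_abs] at h
  rw [div_mul_eq_mul_div, le_div_iff₀ (by positivity)]
  norm_num [Nat.factorial] at h
  linarith

theorem Complex.norm_exp_sub_one_le_norm_mul_exp (u : ℂ) :
    ‖Complex.exp u - 1‖ ≤ ‖u‖ * Real.exp ‖u‖ := by
  simpa using Complex.norm_exp_sub_sum_le_norm_mul_exp u 1

noncomputable def spectralOrbit (ξ : ℝ → ℂ) (z : ℂ) (l : ℝ) : ℂ :=
  Complex.exp (Complex.I * z * l) * ξ l

section SpectralOrbit

variable {ξ : ℝ → ℂ}

theorem norm_spectralOrbit (ξ : ℝ → ℂ) (z : ℂ) (l : ℝ) :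
    ‖spectralOrbit ξ z l‖ = Real.exp (-z.im * l) * ‖ξ l‖ := by
  simp [spectralOrbit, Complex.norm_exp]

theorem exp_mul_abs_mul_norm_spectralOrbit_sq_le {β r : ℝ} {z : ℂ} (hrz : r ≤ z.im)
    (hrzβ : r + z.im ≤ β / 2) (l : ℝ) :
    Real.exp (2 * r * |l|) * ‖spectralOrbit ξ z l‖ ^ 2 ≤ (1 + Real.exp (-β * l)) * ‖ξ l‖ ^ 2 := by
  have hexp : Real.exp (2 * r * |l|) * Real.exp (-z.im * l) ^ 2
      = Real.exp (2 * r * |l| - 2 * z.im * l) := by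
    rw [← Real.exp_nat_mul, ← Real.exp_add]; ring_nf
  rw [norm_spectralOrbit, mul_pow, ← mul_assoc, hexp]
  gcongr
  exact Real.exp_mul_abs_sub_le_one_add_exp hrz hrzβ

theorem norm_spectralOrbit_sq_le {β : ℝ} {z : ℂ} (hz₀ : 0 ≤ z.im) (hzβ : z.im ≤ β / 2) (l : ℝ) :
    ‖spectralOrbit ξ z l‖ ^ 2 ≤ (1 + Real.exp (-β * l)) * ‖ξ l‖ ^ 2 := by
  simpa using exp_mul_abs_mul_norm_spectralOrbit_sq_le (r := 0) (l := l) (ξ := ξ) hz₀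
    (by simpa using hzβ)

theorem measurable_spectralOrbit (hξ : Measurable ξ) (z : ℂ) :
    Measurable (spectralOrbit ξ z) := by
  unfold spectralOrbit; fun_prop

theorem hasDerivAt_spectralOrbit (ξ : ℝ → ℂ) (z : ℂ) (l : ℝ) :
    HasDerivAt (fun w => spectralOrbit ξ w l) (Complex.I * l * spectralOrbit ξ z l) z := by
  unfold spectralOrbit
  refine ((((hasDerivAt_id' z).const_mul Complex.I).mul_const (l : ℂ)).cexp.mul_const
    (ξ l)).congr_deriv ?_
  ring

theorem norm_slope_spectralOrbit_sub_le (ξ : ℝ → ℂ) (z w : ℂ) (l : ℝ) :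
    ‖slope (fun w => spectralOrbit ξ w l) z w - Complex.I * l * spectralOrbit ξ z l‖
      ≤ 2 * |l| * Real.exp (‖w - z‖ * |l|) * ‖spectralOrbit ξ z l‖ := by
  set A := (Complex.exp (Complex.I * (w - z) * l) - 1) / (w - z)
  have hslope : slope (fun w => spectralOrbit ξ w l) z w = A * spectralOrbit ξ z l := by
    rw [slope_def_field]
    simp only [spectralOrbit, A]
    rw [show Complex.I * w * l = Complex.I * (w - z) * l + Complex.I * z * l by ring,
      Complex.exp_add]
    ring
  have hA : ‖A‖ ≤ |l| * Real.exp (‖w - z‖ * |l|) := by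
    rcases eq_or_ne w z with rfl | hwz
    · simp [A]
    have h := Complex.norm_exp_sub_one_le_norm_mul_exp (Complex.I * (w - z) * l)
    have hnorm : ‖Complex.I * (w - z) * l‖ = ‖w - z‖ * |l| := by simp
    rw [hnorm] at h
    rw [norm_div, div_le_iff₀ (norm_pos_iff.2 (sub_ne_zero.2 hwz))]
    linarith
  have hexp : 1 ≤ Real.exp (‖w - z‖ * |l|) := Real.one_le_exp (by positivity)
  rw [hslope, ← sub_mul, norm_mul]
  gcongr
  calc ‖A - Complex.I * l‖ ≤ ‖A‖ + ‖Complex.I * l‖ := norm_sub_le _ _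
    _ ≤ 2 * |l| * Real.exp (‖w - z‖ * |l|) := by
      simp only [norm_mul, Complex.norm_I, Complex.norm_real, Real.norm_eq_abs, one_mul]
      nlinarith [abs_nonneg l]

theorem norm_slope_spectralOrbit_sub_sq_le {β s : ℝ} {z w : ℂ} (hs : 0 < s) (hsz : s ≤ z.im)
    (hszβ : s + z.im ≤ β / 2) (hw : ‖w - z‖ ≤ s / 2) (l : ℝ) :
    ‖slope (fun w => spectralOrbit ξ w l) z w - Complex.I * l * spectralOrbit ξ z l‖ ^ 2
      ≤ 8 / s ^ 2 * ((1 + Real.exp (-β * l)) * ‖ξ l‖ ^ 2) := by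
  have hweight := exp_mul_abs_mul_norm_spectralOrbit_sq_le (ξ := ξ) (β := β) (z := z)
    (r := s / 2 + ‖w - z‖) (by linarith) (by linarith) l
  calc _ ≤ (2 * |l| * Real.exp (‖w - z‖ * |l|) * ‖spectralOrbit ξ z l‖) ^ 2 := by
        gcongr; exact norm_slope_spectralOrbit_sub_le ξ z w l
    _ = 4 * l ^ 2 * Real.exp (2 * ‖w - z‖ * |l|) * ‖spectralOrbit ξ z l‖ ^ 2 := by
        rw [mul_pow, mul_pow, mul_pow, sq_abs, ← Real.exp_nat_mul]; ring_nf
    _ ≤ 4 * (2 / s ^ 2 * Real.exp (s * |l|)) * Real.exp (2 * ‖w - z‖ * |l|)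
          * ‖spectralOrbit ξ z l‖ ^ 2 := by
        gcongr; exact Real.sq_le_mul_exp_mul_abs hs l
    _ = 8 / s ^ 2 * (Real.exp (2 * (s / 2 + ‖w - z‖) * |l|) * ‖spectralOrbit ξ z l‖ ^ 2) := by
        rw [show 2 * (s / 2 + ‖w - z‖) * |l| = s * |l| + 2 * ‖w - z‖ * |l| by ring,
          Real.exp_add]
        ring
    _ ≤ _ := by gcongr

theorem norm_mul_spectralOrbit_sq_le {β s : ℝ} {z : ℂ} (hs : 0 < s) (hsz : s ≤ z.im)
    (hszβ : s + z.im ≤ β / 2) (l : ℝ) :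
    ‖Complex.I * l * spectralOrbit ξ z l‖ ^ 2
      ≤ 2 / s ^ 2 * ((1 + Real.exp (-β * l)) * ‖ξ l‖ ^ 2) := by
  have hweight := exp_mul_abs_mul_norm_spectralOrbit_sq_le (ξ := ξ) (β := β) (z := z) (r := s / 2)
    (by linarith) (by linarith) l
  calc _ = l ^ 2 * ‖spectralOrbit ξ z l‖ ^ 2 := by simp [mul_pow]
    _ ≤ 2 / s ^ 2 * Real.exp (s * |l|) * ‖spectralOrbit ξ z l‖ ^ 2 := by
        gcongr; exact Real.sq_le_mul_exp_mul_abs hs l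
    _ = 2 / s ^ 2 * (Real.exp (2 * (s / 2) * |l|) * ‖spectralOrbit ξ z l‖ ^ 2) := by ring_nf
    _ ≤ _ := by gcongr

variable {μ : Measure ℝ} {β : ℝ} {Φ : ℂ → Lp ℂ 2 μ}

theorem memLp_spectralOrbit (hξ : Measurable ξ)
    (hg : Integrable (fun l => (1 + Real.exp (-β * l)) * ‖ξ l‖ ^ 2) μ) {z : ℂ} (hz₀ : 0 ≤ z.im)
    (hzβ : z.im ≤ β / 2) : MemLp (spectralOrbit ξ z) 2 μ :=
  memLp_two_of_norm_sq_le (measurable_spectralOrbit hξ z).aestronglyMeasurable hg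
    (norm_spectralOrbit_sq_le hz₀ hzβ)

theorem norm_sq_le_of_ae_eq_spectralOrbit (hξ : Measurable ξ)
    (hg : Integrable (fun l => (1 + Real.exp (-β * l)) * ‖ξ l‖ ^ 2) μ) {z : ℂ} (hz₀ : 0 ≤ z.im)
    (hzβ : z.im ≤ β / 2) (hΦz : Φ z =ᵐ[μ] spectralOrbit ξ z) :
    ‖Φ z‖ ^ 2 ≤ ∫ l, (1 + Real.exp (-β * l)) * ‖ξ l‖ ^ 2 ∂μ := by
  rw [Lp.norm_sq_eq_integral_norm_sq,
    integral_congr_ae (hΦz.mono fun l hl => congrArg (‖·‖ ^ 2) hl)]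
  exact integral_mono ((memLp_spectralOrbit hξ hg hz₀ hzβ).integrable_norm_pow two_ne_zero) hg
    (norm_spectralOrbit_sq_le hz₀ hzβ)

theorem continuousOn_of_ae_eq_spectralOrbit
    (hg : Integrable (fun l => (1 + Real.exp (-β * l)) * ‖ξ l‖ ^ 2) μ)
    (hΦ : ∀ z ∈ {z : ℂ | 0 ≤ z.im ∧ z.im ≤ β / 2}, Φ z =ᵐ[μ] spectralOrbit ξ z) :
    ContinuousOn Φ {z : ℂ | 0 ≤ z.im ∧ z.im ≤ β / 2} := by
  intro z hz
  refine Lp.tendsto_of_dominated_convergence ENNReal.ofNat_ne_top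
    (eventually_nhdsWithin_of_forall hΦ) (hΦ z hz) ?_ (hg.const_mul 4)
    (.of_forall fun l => (hasDerivAt_spectralOrbit ξ z l).continuousAt.continuousWithinAt)
  filter_upwards [self_mem_nhdsWithin] with w hw
  refine .of_forall fun l => ?_
  have hw_sq := norm_spectralOrbit_sq_le (ξ := ξ) hw.1 hw.2 l
  have hz_sq := norm_spectralOrbit_sq_le (ξ := ξ) hz.1 hz.2 l
  have htri := norm_sub_le (spectralOrbit ξ w l) (spectralOrbit ξ z l)
  simp only [ENNReal.toReal_ofNat, Real.rpow_two]
  nlinarith [norm_nonneg (spectralOrbit ξ w l - spectralOrbit ξ z l),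
    sq_nonneg (‖spectralOrbit ξ w l‖ - ‖spectralOrbit ξ z l‖)]

theorem differentiableAt_of_ae_eq_spectralOrbit (hξ : Measurable ξ)
    (hg : Integrable (fun l => (1 + Real.exp (-β * l)) * ‖ξ l‖ ^ 2) μ)
    (hΦ : ∀ z ∈ {z : ℂ | 0 ≤ z.im ∧ z.im ≤ β / 2}, Φ z =ᵐ[μ] spectralOrbit ξ z)
    {z : ℂ} (hz₀ : 0 < z.im) (hzβ : z.im < β / 2) : DifferentiableAt ℂ Φ z := by
  set s := min z.im (β / 2 - z.im)
  have hs : 0 < s := lt_min hz₀ (by linarith)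
  have hsz : s ≤ z.im := min_le_left _ _
  have hszβ : s + z.im ≤ β / 2 := by linarith [min_le_right z.im (β / 2 - z.im)]
  have hD : MemLp (fun l => Complex.I * l * spectralOrbit ξ z l) 2 μ :=
    memLp_two_of_norm_sq_le (by have := measurable_spectralOrbit hξ z; fun_prop) (hg.const_mul _)
      (norm_mul_spectralOrbit_sq_le hs hsz hszβ)
  have hnear : ∀ᶠ w in 𝓝[≠] z, ‖w - z‖ ≤ s / 2 := by
    filter_upwards [nhdsWithin_le_nhds (Metric.closedBall_mem_nhds z (half_pos hs))] with w hw
    rwa [Metric.mem_closedBall, dist_eq_norm] at hw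
  refine (hasDerivAt_iff_tendsto_slope.2 ?_).differentiableAt (f' := hD.toLp _)
  refine Lp.tendsto_of_dominated_convergence ENNReal.ofNat_ne_top ?_ hD.coeFn_toLp ?_
    (hg.const_mul (8 / s ^ 2))
    (.of_forall fun l => (hasDerivAt_spectralOrbit ξ z l).tendsto_slope)
  · filter_upwards [hnear] with w hw
    have him : |w.im - z.im| ≤ s / 2 := by
      simpa using (Complex.abs_im_le_norm (w - z)).trans hw
    have hwS : w ∈ {z : ℂ | 0 ≤ z.im ∧ z.im ≤ β / 2} := by
      constructor <;> linarith [abs_le.1 him]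
    rw [slope_def_module]
    filter_upwards [Lp.coeFn_smul (w - z)⁻¹ (Φ w - Φ z), Lp.coeFn_sub (Φ w) (Φ z),
      hΦ w hwS, hΦ z ⟨hz₀.le, hzβ.le⟩] with l h_smul h_sub hw hz
    simp only [h_smul, Pi.smul_apply, h_sub, Pi.sub_apply, hw, hz, slope_def_module]
  · filter_upwards [hnear] with w hw
    refine .of_forall fun l => ?_
    simpa only [ENNReal.toReal_ofNat, Real.rpow_two] using
      norm_slope_spectralOrbit_sub_sq_le hs hsz hszβ hw l

end SpectralOrbit

theorem kms_orbit_map_analytic_strip_general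
    (μ : Measure ℝ) (β : ℝ)
    (ξ : ℝ → ℂ) (hmeas : Measurable ξ)
    (hL2 : Integrable (fun l : ℝ => ‖ξ l‖ ^ 2) μ)
    (hL2β : Integrable (fun l : ℝ => Real.exp (-β * l) * ‖ξ l‖ ^ 2) μ) :
    ∃ Φ : ℂ → Lp ℂ 2 μ,
      (∀ z ∈ {z : ℂ | 0 ≤ z.im ∧ z.im ≤ β / 2},
        (Φ z : ℝ → ℂ) =ᵐ[μ] fun l : ℝ => Complex.exp (Complex.I * z * l) * ξ l) ∧
      ContinuousOn Φ {z : ℂ | 0 ≤ z.im ∧ z.im ≤ β / 2} ∧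
      (∀ z ∈ {z : ℂ | 0 ≤ z.im ∧ z.im ≤ β / 2},
        ‖Φ z‖ ^ 2 ≤ ∫ l : ℝ, (1 + Real.exp (-β * l)) * ‖ξ l‖ ^ 2 ∂μ) ∧
      (∀ z : ℂ, 0 < z.im → z.im < β / 2 → DifferentiableAt ℂ Φ z) := by
  have hg : Integrable (fun l => (1 + Real.exp (-β * l)) * ‖ξ l‖ ^ 2) μ :=
    (hL2.add hL2β).congr (.of_forall fun l => by simp only [Pi.add_apply]; ring)
  obtain ⟨Φ, hΦ⟩ := exists_Lp_ae_eq_of_memLp (S := {z : ℂ | 0 ≤ z.im ∧ z.im ≤ β / 2})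
    fun z hz => memLp_spectralOrbit hmeas hg hz.1 hz.2
  exact ⟨Φ, hΦ, continuousOn_of_ae_eq_spectralOrbit hg hΦ,
    fun z hz => norm_sq_le_of_ae_eq_spectralOrbit hmeas hg hz.1 hz.2 (hΦ z hz),
    fun z hz₀ hzβ => differentiableAt_of_ae_eq_spectralOrbit hmeas hg hΦ hz₀ hzβ⟩

/-- Spectral form of Pedersen Prop. 8.14.2: under the KMS-type integrability conditions on `ξ`,
the `L²(μ)`-valued map `z ↦ (λ ↦ e^{izλ} ξ(λ))` is continuous and bounded on the closed strip
`0 ≤ Im z ≤ β/2` and holomorphic in its interior. -/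
theorem kms_orbit_map_analytic_strip
    (μ : Measure ℝ) [SigmaFinite μ] (β : ℝ) (hβ : 0 < β)
    (ξ : ℝ → ℂ) (hmeas : Measurable ξ)
    (hL2 : Integrable (fun l : ℝ => ‖ξ l‖ ^ 2) μ)
    (hL2β : Integrable (fun l : ℝ => Real.exp (-β * l) * ‖ξ l‖ ^ 2) μ) :
    ∃ Φ : ℂ → Lp ℂ 2 μ,
      (∀ z ∈ {z : ℂ | 0 ≤ z.im ∧ z.im ≤ β / 2},
        (Φ z : ℝ → ℂ) =ᵐ[μ] fun l : ℝ => Complex.exp (Complex.I * z * l) * ξ l) ∧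
      ContinuousOn Φ {z : ℂ | 0 ≤ z.im ∧ z.im ≤ β / 2} ∧
      (∀ z ∈ {z : ℂ | 0 ≤ z.im ∧ z.im ≤ β / 2},
        ‖Φ z‖ ^ 2 ≤ ∫ l : ℝ, (1 + Real.exp (-β * l)) * ‖ξ l‖ ^ 2 ∂μ) ∧
      (∀ z : ℂ, 0 < z.im → z.im < β / 2 → DifferentiableAt ℂ Φ z) :=
  kms_orbit_map_analytic_strip_general μ β ξ hmeas hL2 hL2β
end

section
/- In the setting of the unitary implementation: H a complex Hilbert space, V a complex vector space, j : V → H ℂ-linear with dense range, T : ℝ → GL(V) a one-parameter group of ℂ-linear bijections preserving the induced inner product (⟨ j(T_t v), j(T_t w) ⟩ = ⟨ j(v), j(w) ⟩ for all t, v, w), and U_t the unitary group on H with U_t(j(v)) = j(T_t v). If in addition the map t ↦ ⟨ j(v), j(T_t w) ⟩ is continuous on ℝ for every v, w ∈ V, then the unitary group is strongly continuous: for every x ∈ H, the map t ↦ U_t x is continuous from ℝ to H. -/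
/-!
For an isometry `u`, `‖u y - y‖² = 2‖y‖² - 2 Re⟪y, u y⟫`, so weak continuity of `t ↦ U_t y` at `0`
is norm continuity there. Being isometries, the `U_t` are equicontinuous, so norm continuity at `0`
passes from the dense range of `j` to all of `H`; the group law `U_t = U_{t₀} U_{t - t₀}` then
moves it from `0` to every `t₀`.
-/

open Filter Topology

theorem LinearIsometry.norm_apply_sub_self_sq {𝕜 E : Type*} [RCLike 𝕜] [NormedAddCommGroup E]
    [InnerProductSpace 𝕜 E] (u : E →ₗᵢ[𝕜] E) (y : E) :
    ‖u y - y‖ ^ 2 = 2 * ‖y‖ ^ 2 - 2 * RCLike.re (inner 𝕜 y (u y)) := by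
  rw [@norm_sub_sq 𝕜, u.norm_map, ← inner_conj_symm, RCLike.conj_re]
  ring

theorem LinearIsometry.tendsto_apply_of_tendsto_inner {ι 𝕜 E : Type*} [RCLike 𝕜]
    [NormedAddCommGroup E] [InnerProductSpace 𝕜 E] {l : Filter ι} {u : ι → E →ₗᵢ[𝕜] E} {y : E}
    (h : Tendsto (fun i => inner 𝕜 y (u i y)) l (𝓝 (inner 𝕜 y y))) :
    Tendsto (fun i => u i y) l (𝓝 y) := by
  have hsq : Tendsto (fun i => ‖u i y - y‖ ^ 2) l (𝓝 0) := by
    have hlim := ((RCLike.continuous_re.tendsto _).comp h).const_mul 2 |>.const_sub (2 * ‖y‖ ^ 2)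
    rw [Function.comp_def, inner_self_eq_norm_sq, sub_self] at hlim
    simpa only [LinearIsometry.norm_apply_sub_self_sq] using hlim
  rw [tendsto_iff_norm_sub_tendsto_zero]
  simpa only [Real.sqrt_sq (norm_nonneg _), Real.sqrt_zero] using hsq.sqrt

theorem DenseRange.tendsto_of_equicontinuous {ι α X : Type*} [UniformSpace X] {l : Filter ι}
    {F : ι → X → X} {f : α → X} (hf : DenseRange f) (hF : Equicontinuous F)
    (h : ∀ a, Tendsto (F · (f a)) l (𝓝 (f a))) (x : X) : Tendsto (F · x) l (𝓝 x) :=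
  hf.induction_on x (hF.isClosed_setOfPred_tendsto continuous_id) h

theorem continuous_orbit_of_tendsto_nhds_zero {G X : Type*} [AddGroup G] [TopologicalSpace G]
    [IsTopologicalAddGroup G] [TopologicalSpace X] {U : G → X → X} (hU : ∀ s, Continuous (U s))
    (hadd : ∀ s t x, U (s + t) x = U s (U t x)) {x : X}
    (h0 : Tendsto (fun t => U t x) (𝓝 0) (𝓝 x)) : Continuous fun t => U t x := by
  refine continuous_iff_continuousAt.mpr fun t₀ => ?_
  have hshift : Tendsto (fun t => -t₀ + t) (𝓝 t₀) (𝓝 0) := by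
    simpa only [neg_add_cancel] using (continuous_const_add (-t₀)).tendsto t₀
  have hlim := ((hU t₀).tendsto x).comp (h0.comp hshift)
  refine hlim.congr fun t => ?_
  simp only [Function.comp_apply, ← hadd, add_neg_cancel_left]

theorem unitary_group_strongly_continuous_general
    {H : Type*} [NormedAddCommGroup H] [InnerProductSpace ℂ H]
    {V : Type*} [AddCommGroup V] [Module ℂ V]
    (j : V →ₗ[ℂ] H) (hdense : DenseRange j)
    (T : ℝ → (V ≃ₗ[ℂ] V))
    (hT0 : ∀ v : V, T 0 v = v)
    (U : ℝ → (H ≃ₗᵢ[ℂ] H))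
    (hUadd : ∀ s t : ℝ, ∀ x : H, U (s + t) x = U s (U t x))
    (hUj : ∀ (t : ℝ) (v : V), U t (j v) = j (T t v))
    (hweak : ∀ v w : V, Continuous fun t : ℝ => (inner ℂ (j v) (j (T t w)) : ℂ)) :
    ∀ x : H, Continuous fun t : ℝ => U t x := by
  have hrange : ∀ v, Tendsto (fun t => U t (j v)) (𝓝 0) (𝓝 (j v)) := fun v =>
    LinearIsometry.tendsto_apply_of_tendsto_inner (u := fun t => (U t).toLinearIsometry) <| by
      simpa only [hT0, ← hUj, LinearIsometryEquiv.coe_toLinearIsometry] using (hweak v v).tendsto 0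
  have hequi : Equicontinuous fun t => ⇑(U t) :=
    (LipschitzWith.uniformEquicontinuous _ 1 fun t => (U t).lipschitz).equicontinuous
  exact fun x => continuous_orbit_of_tendsto_nhds_zero (fun s => (U s).continuous) hUadd
    (hdense.tendsto_of_equicontinuous hequi hrange x)

/-- If the implemented unitary one-parameter group is weakly continuous on the dense range of
`j`, then it is strongly continuous: every orbit map `t ↦ U_t x` is norm continuous. -/
theorem unitary_group_strongly_continuous
    {H : Type*} [NormedAddCommGroup H] [InnerProductSpace ℂ H] [CompleteSpace H]
    {V : Type*} [AddCommGroup V] [Module ℂ V]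
    (j : V →ₗ[ℂ] H) (hdense : DenseRange j)
    (T : ℝ → (V ≃ₗ[ℂ] V))
    (hT0 : ∀ v : V, T 0 v = v)
    (hTadd : ∀ s t : ℝ, ∀ v : V, T (s + t) v = T s (T t v))
    (hinner : ∀ (t : ℝ) (v w : V),
      (inner ℂ (j (T t v)) (j (T t w)) : ℂ) = inner ℂ (j v) (j w))
    (U : ℝ → (H ≃ₗᵢ[ℂ] H))
    (hU0 : ∀ x : H, U 0 x = x)
    (hUadd : ∀ s t : ℝ, ∀ x : H, U (s + t) x = U s (U t x))
    (hUj : ∀ (t : ℝ) (v : V), U t (j v) = j (T t v))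
    (hweak : ∀ v w : V, Continuous fun t : ℝ => (inner ℂ (j v) (j (T t w)) : ℂ)) :
    ∀ x : H, Continuous fun t : ℝ => U t x :=
  unitary_group_strongly_continuous_general j hdense T hT0 U hUadd hUj hweak
end
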